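/- arXiv:1306.1437 — 2 statements merged into one kernel-verified Lean document; each statement's English description precedes it below -/
import Mathlib

section
/- Let c^1,…,c^s ∈ ℤ^d be such that the map ζ ↦ ∑_{k=1}^s ζ_k c^k from {−1,0,1}^s to ℤ^d is injective. Then ∫_{[0,1]^d} ∏_{k=1}^s (1 + cos(2π⟨c^k,t⟩)) dt = 1, and consequently ∫_{[0,1]^d} | −1 + ∏_{k=1}^s (1 + cos(2π⟨c^k,t⟩)) | dt ≤ 2. -/
open MeasureTheory Filter Real Topology

/-! Since `1 + cos θ = 1 + (e^{iθ} + e^{-iθ}) / 2`, the Riesz product expands as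
`∑_{ζ ∈ {-1,0,1}^s} w_ζ e^{2πi⟨∑ ζ_k c^k, t⟩}` with `w_0 = 1`. Integration over the unit cube
kills every character of nonzero frequency, and by injectivity only `ζ = 0` has frequency `0`.
The product is nonnegative, so `|-1 + P| ≤ 1 + P` and the `L¹` bound follows from `∫ P = 1`. -/

section Characters

open Complex

lemma integral_Icc_zero_one_exp_int_mul (m : ℤ) :
    ∫ x in Set.Icc (0 : ℝ) 1, cexp (2 * π * I * m * x) = if m = 0 then 1 else 0 := by
  rw [integral_Icc_eq_integral_Ioc, ← intervalIntegral.integral_of_le zero_le_one]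
  split_ifs with hm
  · simp [hm]
  · have hc : 2 * π * I * m ≠ 0 := by simp [pi_ne_zero, hm]
    have h_one : cexp (2 * π * I * m) = 1 := by
      rw [show 2 * π * I * m = m * (2 * π * I) by ring]
      exact exp_int_mul_two_pi_mul_I m
    simp [integral_exp_mul_complex hc, h_one]

lemma setIntegral_Icc_pi_prod {ι 𝕜 : Type*} [Fintype ι] [RCLike 𝕜] (f : ι → ℝ → 𝕜)
    (a b : ι → ℝ) :
    ∫ t in Set.Icc a b, ∏ i, f i (t i) = ∏ i, ∫ x in Set.Icc (a i) (b i), f i x := by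
  rw [← Set.pi_univ_Icc, volume_pi, Measure.restrict_pi_pi, integral_fintype_prod_eq_prod]

lemma integral_unitCube_exp_inner {ι : Type*} [Fintype ι] (m : ι → ℤ) :
    ∫ t in Set.Icc (0 : ι → ℝ) 1, cexp (2 * π * I * ∑ i, (m i : ℂ) * t i) =
      if m = 0 then 1 else 0 := by
  classical
  have h_prod (t : ι → ℝ) :
      cexp (2 * π * I * ∑ i, (m i : ℂ) * t i) = ∏ i, cexp (2 * π * I * m i * t i) := by
    rw [← Complex.exp_sum, Finset.mul_sum]
    simp only [mul_assoc]
  simp_rw [h_prod]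
  rw [setIntegral_Icc_pi_prod (fun i x => cexp (2 * π * I * m i * x))]
  simp [integral_Icc_zero_one_exp_int_mul, Finset.prod_boole, funext_iff]

lemma one_add_cos_eq_sum_exp (x : ℝ) :
    ((1 + Real.cos x : ℝ) : ℂ) =
      ∑ z ∈ ({-1, 0, 1} : Finset ℤ), (if z = 0 then 1 else 1 / 2) * cexp (z * x * I) := by
  simp [Complex.cos]
  ring

lemma prod_one_add_cos_eq_sum_exp {ι κ : Type*} [Fintype ι] [Fintype κ] [DecidableEq κ]
    (c : κ → ι → ℤ) (t : ι → ℝ) :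
    ((∏ k, (1 + Real.cos (2 * π * ∑ i, (c k i : ℝ) * t i)) : ℝ) : ℂ) =
      ∑ ζ ∈ Fintype.piFinset fun _ : κ => ({-1, 0, 1} : Finset ℤ),
        (∏ k, if ζ k = 0 then 1 else 1 / 2) *
          cexp (2 * π * I * ∑ i, (((∑ k, ζ k • c k) i : ℤ) : ℂ) * t i) := by
  simp_rw [Complex.ofReal_prod, one_add_cos_eq_sum_exp]
  rw [Finset.prod_univ_sum]
  refine Finset.sum_congr rfl fun ζ _ => ?_
  rw [Finset.prod_mul_distrib, ← Complex.exp_sum]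
  congr 2
  simp only [Finset.sum_apply, Pi.smul_apply, smul_eq_mul]
  push_cast
  simp only [Finset.mul_sum, Finset.sum_mul]
  rw [Finset.sum_comm]
  exact Finset.sum_congr rfl fun _ _ => Finset.sum_congr rfl fun _ _ => by ring

end Characters

lemma integral_unitCube_prod_one_add_cos {ι κ : Type*} [Fintype ι] [Fintype κ]
    (c : κ → ι → ℤ)
    (hc : ∀ ζ : κ → ℤ, (∀ k, ζ k ∈ ({-1, 0, 1} : Set ℤ)) → ∑ k, ζ k • c k = 0 → ζ = 0) :
    ∫ t in Set.Icc (0 : ι → ℝ) 1, ∏ k, (1 + Real.cos (2 * π * ∑ i, (c k i : ℝ) * t i)) = 1 := by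
  classical
  suffices h : ∫ t in Set.Icc (0 : ι → ℝ) 1,
      ((∏ k, (1 + Real.cos (2 * π * ∑ i, (c k i : ℝ) * t i)) : ℝ) : ℂ) = 1 by
    exact Complex.ofReal_injective (by rw [← integral_complex_ofReal, h, Complex.ofReal_one])
  simp_rw [prod_one_add_cos_eq_sum_exp]
  rw [integral_finsetSum _ fun ζ _ => Continuous.integrableOn_Icc (by fun_prop)]
  simp_rw [integral_const_mul, integral_unitCube_exp_inner]
  rw [Finset.sum_eq_single 0]
  · simp
  · intro ζ hζ hζ0
    rw [if_neg fun h => hζ0 (hc ζ (by simpa using hζ) h), mul_zero]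
  · simp

instance isProbabilityMeasure_restrict_unitCube {ι : Type*} [Fintype ι] :
    IsProbabilityMeasure (volume.restrict (Set.Icc (0 : ι → ℝ) 1)) :=
  ⟨by simp [Real.volume_Icc_pi]⟩

lemma integral_abs_neg_one_add_le_two {α : Type*} [MeasurableSpace α] {μ : Measure α}
    [IsProbabilityMeasure μ] {f : α → ℝ} (hf : 0 ≤ᵐ[μ] f) (hfi : Integrable f μ)
    (h_one : ∫ x, f x ∂μ = 1) :
    ∫ x, |-1 + f x| ∂μ ≤ 2 :=
  calc ∫ x, |-1 + f x| ∂μ ≤ ∫ x, (1 + f x) ∂μ :=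
        integral_mono_of_nonneg (ae_of_all _ fun _ => abs_nonneg _)
          ((integrable_const 1).add hfi)
          (hf.mono fun x (hx : 0 ≤ f x) =>
            show |-1 + f x| ≤ 1 + f x from abs_le.mpr ⟨by linarith, by linarith⟩)
    _ = 2 := by
        rw [integral_add (integrable_const 1) hfi, h_one]
        norm_num

/-- If the map `ζ ↦ ∑_k ζ_k c^k` from `{−1,0,1}^s` to `ℤ^d` is injective, then the Riesz
product `∏_k (1 + cos(2π⟨c^k,t⟩))` has integral `1` over the unit cube, and consequently
`‖−1 + ∏_k (1 + cos(2π⟨c^k,t⟩))‖_{L¹([0,1]^d)} ≤ 2`. -/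
theorem riesz_product_integral (d s : ℕ) (c : Fin s → (Fin d → ℤ))
    (hinj : ∀ ζ ζ' : Fin s → ℤ,
      (∀ k, ζ k ∈ ({-1, 0, 1} : Set ℤ)) → (∀ k, ζ' k ∈ ({-1, 0, 1} : Set ℤ)) →
      (∑ k, ζ k • c k) = (∑ k, ζ' k • c k) → ζ = ζ') :
    (∫ t in Set.Icc (0 : Fin d → ℝ) 1,
        ∏ k : Fin s, (1 + Real.cos (2 * Real.pi * ∑ i, (c k i : ℝ) * t i))) = 1 ∧
    (∫ t in Set.Icc (0 : Fin d → ℝ) 1,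
        |(-1 : ℝ) + ∏ k : Fin s,
          (1 + Real.cos (2 * Real.pi * ∑ i, (c k i : ℝ) * t i))|) ≤ 2 := by
  have h_one := integral_unitCube_prod_one_add_cos c fun ζ hζ h_zero =>
    hinj ζ 0 hζ (by simp) (by simpa using h_zero)
  refine ⟨h_one, integral_abs_neg_one_add_le_two ?_ ?_ h_one⟩
  · exact ae_of_all _ fun t =>
      Finset.prod_nonneg fun k _ => neg_le_iff_add_nonneg'.mp (neg_one_le_cos _)
  · exact Continuous.integrableOn_Icc (by fun_prop)
end

section
/- Let d ≥ 2 and let m : ℝ^d → ℂ be a bounded function which has almost radial limits at 0 (condition (*)). Then for every ξ ∈ ℝ^d \ {0} the radial limit Ω(ξ) = lim_{t→0⁺} m(tξ) exists; moreover the function Ω so defined is homogeneous of degree zero (Ω(tξ) = Ω(ξ) for all t > 0 and ξ ≠ 0) and continuous on ℝ^d \ {0}. -/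
open MeasureTheory Filter Real Topology

/-- `m` has *almost radial limits* at `0` (condition (*)): whenever `t_k → 0⁺`, `s_k → 0⁺`,
`v^k, w^k` are unit vectors, and `m(t_k v^k) → a`, `m(s_k w^k) → b` with `a ≠ b`, then
`liminf_k |v^k − w^k| > 0`. -/
def AlmostRadialLimits (d : ℕ) (m : EuclideanSpace ℝ (Fin d) → ℂ) : Prop :=
  ∀ (t s : ℕ → ℝ) (v w : ℕ → EuclideanSpace ℝ (Fin d)) (a b : ℂ),
    (∀ k, 0 < t k) → (∀ k, 0 < s k) →
    Tendsto t atTop (𝓝 0) → Tendsto s atTop (𝓝 0) →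
    (∀ k, ‖v k‖ = 1) → (∀ k, ‖w k‖ = 1) →
    Tendsto (fun k => m (t k • v k)) atTop (𝓝 a) →
    Tendsto (fun k => m (s k • w k)) atTop (𝓝 b) →
    a ≠ b →
    0 < liminf (fun k => ‖v k - w k‖) atTop

/-- Key consequence of condition (*): if `v_k → w` and `m(t_k v_k) → a`, `m(s_k w) → b`
along positive null sequences, then `a = b`. -/
lemma arl_key {d : ℕ} {m : EuclideanSpace ℝ (Fin d) → ℂ}
    (hstar : AlmostRadialLimits d m)
    {t s : ℕ → ℝ} {v : ℕ → EuclideanSpace ℝ (Fin d)} {w : EuclideanSpace ℝ (Fin d)} {a b : ℂ}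
    (ht0 : ∀ k, 0 < t k) (hs0 : ∀ k, 0 < s k)
    (htlim : Tendsto t atTop (𝓝 0)) (hslim : Tendsto s atTop (𝓝 0))
    (hv : ∀ k, ‖v k‖ = 1) (hw : ‖w‖ = 1)
    (hvw : Tendsto v atTop (𝓝 w))
    (ha : Tendsto (fun k => m (t k • v k)) atTop (𝓝 a))
    (hb : Tendsto (fun k => m (s k • w)) atTop (𝓝 b)) : a = b := by
  by_contra hab
  have hpos := hstar t s v (fun _ => w) a b ht0 hs0 htlim hslim hv (fun _ => hw) ha hb hab
  have h0 : Tendsto (fun k => ‖v k - w‖) atTop (𝓝 0) := by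
    have := (hvw.sub (tendsto_const_nhds (x := w))).norm
    simpa using this
  rw [h0.liminf_eq] at hpos
  exact lt_irrefl 0 hpos

/-- negation of metric convergence gives a frequently-far subindex property. -/
lemma not_tendsto_freq {f : ℕ → ℂ} {a : ℂ} (h : ¬ Tendsto f atTop (𝓝 a)) :
    ∃ ε > 0, ∃ᶠ k in atTop, ε ≤ dist (f k) a := by
  rw [Metric.tendsto_atTop] at h
  push_neg at h
  obtain ⟨ε, hε, hfr⟩ := h
  exact ⟨ε, hε, frequently_atTop.2 fun N => (hfr N).imp fun k ⟨h1, h2⟩ => ⟨h1, h2⟩⟩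

/-- Bolzano–Weierstrass for norm-bounded complex sequences. -/
lemma bdd_subseq {x : ℕ → ℂ} {B : ℝ} (hx : ∀ n, ‖x n‖ ≤ B) :
    ∃ a, ∃ φ : ℕ → ℕ, StrictMono φ ∧ Tendsto (x ∘ φ) atTop (𝓝 a) := by
  obtain ⟨a, -, φ, hφ, h⟩ := tendsto_subseq_of_bounded
    (Metric.isBounded_closedBall (x := (0 : ℂ)) (r := B))
    (fun n => mem_closedBall_zero_iff.2 (hx n))
  exact ⟨a, φ, hφ, h⟩

/-- Substituting a positive scaling in a radial limit. -/
lemma tendsto_smul_subst {d : ℕ} {m : EuclideanSpace ℝ (Fin d) → ℂ}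
    {ξ : EuclideanSpace ℝ (Fin d)} {c : ℝ} (hc : 0 < c) {A : ℂ}
    (h : Tendsto (fun t : ℝ => m (t • ξ)) (𝓝[>] (0 : ℝ)) (𝓝 A)) :
    Tendsto (fun t : ℝ => m (t • (c • ξ))) (𝓝[>] (0 : ℝ)) (𝓝 A) := by
  have hmap : Tendsto (fun t : ℝ => t * c) (𝓝[>] (0 : ℝ)) (𝓝[>] (0 : ℝ)) := by
    apply tendsto_nhdsWithin_of_tendsto_nhds_of_eventually_within
    · have h1 : Tendsto (fun t : ℝ => t * c) (𝓝 0) (𝓝 (0 * c)) :=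
        (continuous_mul_right c).tendsto 0
      rw [zero_mul] at h1
      exact h1.mono_left (nhdsWithin_le_nhds (s := Set.Ioi (0:ℝ)))
    · filter_upwards [self_mem_nhdsWithin] with t ht
      exact Set.mem_Ioi.2 (mul_pos ht hc)
  have hcomp := h.comp hmap
  have : (fun t : ℝ => m (t • (c • ξ))) = (fun t : ℝ => m (t • ξ)) ∘ (fun t : ℝ => t * c) := by
    funext t
    simp [Function.comp, smul_smul]
  rw [this]
  exact hcomp

/-- Existence of the radial limit along a unit vector. -/
lemma exists_radial_limit {d : ℕ} {m : EuclideanSpace ℝ (Fin d) → ℂ} {B : ℝ}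
    (hbdd : ∀ ξ, ‖m ξ‖ ≤ B) (hstar : AlmostRadialLimits d m)
    {v : EuclideanSpace ℝ (Fin d)} (hv : ‖v‖ = 1) :
    ∃ a, Tendsto (fun t : ℝ => m (t • v)) (𝓝[>] (0 : ℝ)) (𝓝 a) := by
  set c : ℕ → ℝ := fun k => 1 / ((k : ℝ) + 1) with hcdef
  have hcpos : ∀ k, 0 < c k := fun k => by positivity
  have hclim : Tendsto c atTop (𝓝 0) := tendsto_one_div_add_atTop_nhds_zero_nat
  obtain ⟨a, φ0, hφ0, ha⟩ := bdd_subseq (x := fun k => m (c k • v)) (fun n => hbdd _)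
  refine ⟨a, ?_⟩
  rw [tendsto_iff_seq_tendsto]
  intro x hx
  by_contra hcon
  obtain ⟨ε, hε, hfr⟩ := not_tendsto_freq hcon
  obtain ⟨φ, hφ, hdist⟩ := extraction_of_frequently_atTop hfr
  have hmem : ∀ᶠ k in atTop, x k ∈ Set.Ioi (0 : ℝ) := hx self_mem_nhdsWithin
  obtain ⟨N, hN⟩ := eventually_atTop.1 hmem
  have hx0 : Tendsto x atTop (𝓝 0) := hx.mono_right nhdsWithin_le_nhds
  obtain ⟨b, ψ, hψ, hb⟩ := bdd_subseq (x := fun k => m (x (φ k) • v)) (fun n => hbdd _)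
  set t : ℕ → ℝ := fun k => x (φ (ψ (k + N))) with htdef
  have ht0 : ∀ k, 0 < t k := by
    intro k
    refine hN _ ?_
    calc N ≤ k + N := Nat.le_add_left N k
      _ ≤ ψ (k + N) := hψ.le_apply
      _ ≤ φ (ψ (k + N)) := hφ.le_apply
  have hmono : Tendsto (fun k => φ (ψ (k + N))) atTop atTop :=
    hφ.tendsto_atTop.comp (hψ.tendsto_atTop.comp (tendsto_add_atTop_nat N))
  have htlim : Tendsto t atTop (𝓝 0) := hx0.comp hmono
  have hbm : Tendsto (fun k => m (t k • v)) atTop (𝓝 b) :=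
    (tendsto_add_atTop_iff_nat N).2 hb
  have hdistba : ε ≤ dist b a := by
    have hdd : Tendsto (fun k => dist (m (x (φ (ψ k)) • v)) a) atTop (𝓝 (dist b a)) :=
      hb.dist tendsto_const_nhds
    exact ge_of_tendsto' hdd (fun k => hdist (ψ k))
  have hba : b ≠ a := by
    intro h
    rw [h] at hdistba
    simp at hdistba
    exact absurd hdistba (not_le.2 hε)
  -- second sequence: c ∘ φ0
  have hs0 : ∀ k, 0 < c (φ0 k) := fun k => hcpos _
  have hslim : Tendsto (fun k => c (φ0 k)) atTop (𝓝 0) := hclim.comp hφ0.tendsto_atTop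
  exact hba (arl_key hstar ht0 hs0 htlim hslim (fun _ => hv) hv tendsto_const_nhds hbm ha)

/-- If `d ≥ 2` and a bounded `m` has almost radial limits at `0`, then every radial limit
`Ω(ξ) = lim_{t→0⁺} m(tξ)` exists; the resulting function is homogeneous of degree zero and
continuous away from the origin. -/
theorem radial_limits_exist (d : ℕ) (hd : 2 ≤ d) (m : EuclideanSpace ℝ (Fin d) → ℂ)
    (hbdd : ∃ B : ℝ, ∀ ξ, ‖m ξ‖ ≤ B) (hstar : AlmostRadialLimits d m) :
    ∃ Ω : EuclideanSpace ℝ (Fin d) → ℂ,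
      (∀ ξ : EuclideanSpace ℝ (Fin d), ξ ≠ 0 →
        Tendsto (fun t : ℝ => m (t • ξ)) (𝓝[>] (0 : ℝ)) (𝓝 (Ω ξ))) ∧
      (∀ t : ℝ, 0 < t → ∀ ξ : EuclideanSpace ℝ (Fin d), ξ ≠ 0 → Ω (t • ξ) = Ω ξ) ∧
      ContinuousOn Ω {(0 : EuclideanSpace ℝ (Fin d))}ᶜ := by
  obtain ⟨B, hB⟩ := hbdd
  set Ω : EuclideanSpace ℝ (Fin d) → ℂ :=
    fun ξ => limUnder (𝓝[>] (0 : ℝ)) (fun t => m (t • ξ)) with hΩdef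
  -- radial limits exist and equal Ω
  have hrad : ∀ ξ : EuclideanSpace ℝ (Fin d), ξ ≠ 0 →
      Tendsto (fun t : ℝ => m (t • ξ)) (𝓝[>] (0 : ℝ)) (𝓝 (Ω ξ)) := by
    intro ξ hξ
    have hnorm : ‖ξ‖ ≠ 0 := norm_ne_zero_iff.2 hξ
    have hnormpos : (0 : ℝ) < ‖ξ‖ := norm_pos_iff.2 hξ
    have hu : ‖(‖ξ‖⁻¹ • ξ : EuclideanSpace ℝ (Fin d))‖ = 1 := norm_smul_inv_norm hξ
    obtain ⟨A, hA⟩ := exists_radial_limit hB hstar hu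
    have hξA : Tendsto (fun t : ℝ => m (t • ξ)) (𝓝[>] (0 : ℝ)) (𝓝 A) := by
      have := tendsto_smul_subst hnormpos hA
      rwa [smul_inv_smul₀ hnorm] at this
    have : Ω ξ = A := hξA.limUnder_eq
    rwa [this]
  -- homogeneity
  have hhom : ∀ t : ℝ, 0 < t → ∀ ξ : EuclideanSpace ℝ (Fin d), ξ ≠ 0 → Ω (t • ξ) = Ω ξ := by
    intro t ht ξ hξ
    have h2 := tendsto_smul_subst ht (hrad ξ hξ)
    have h3 := hrad (t • ξ) (smul_ne_zero (ne_of_gt ht) hξ)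
    exact tendsto_nhds_unique h3 h2
  -- bound for Ω
  have hΩbdd : ∀ ξ : EuclideanSpace ℝ (Fin d), ξ ≠ 0 → ‖Ω ξ‖ ≤ B := by
    intro ξ hξ
    exact le_of_tendsto (hrad ξ hξ).norm (Eventually.of_forall fun t => hB _)
  refine ⟨Ω, hrad, hhom, ?_⟩
  -- continuity away from 0
  intro ξ hξmem
  have hξ : ξ ≠ 0 := hξmem
  show Tendsto Ω (𝓝[{(0 : EuclideanSpace ℝ (Fin d))}ᶜ] ξ) (𝓝 (Ω ξ))
  rw [tendsto_iff_seq_tendsto]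
  intro x hx
  have hxlim : Tendsto x atTop (𝓝 ξ) := hx.mono_right nhdsWithin_le_nhds
  have hxne : ∀ᶠ k in atTop, x k ∈ ({(0 : EuclideanSpace ℝ (Fin d))}ᶜ : Set _) :=
    hx self_mem_nhdsWithin
  obtain ⟨N, hN⟩ := eventually_atTop.1 hxne
  set y : ℕ → EuclideanSpace ℝ (Fin d) := fun k => x (k + N) with hydef
  have hyne : ∀ k, y k ≠ 0 := fun k => hN _ (Nat.le_add_left N k)
  have hylim : Tendsto y atTop (𝓝 ξ) := (tendsto_add_atTop_iff_nat N).2 hxlim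
  suffices hy : Tendsto (fun k => Ω (y k)) atTop (𝓝 (Ω ξ)) by
    exact (tendsto_add_atTop_iff_nat N).1 hy
  by_contra hcon
  obtain ⟨ε, hε, hfr⟩ := not_tendsto_freq hcon
  obtain ⟨φ, hφ, hdist⟩ := extraction_of_frequently_atTop hfr
  obtain ⟨b, ψ, hψ, hb⟩ := bdd_subseq (x := fun j => Ω (y (φ j)))
    (fun j => hΩbdd _ (hyne _))
  set z : ℕ → EuclideanSpace ℝ (Fin d) := fun j => y (φ (ψ j)) with hzdef
  have hzne : ∀ j, z j ≠ 0 := fun j => hyne _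
  have hzlim : Tendsto z atTop (𝓝 ξ) :=
    hylim.comp (hφ.tendsto_atTop.comp hψ.tendsto_atTop)
  have hΩz : Tendsto (fun j => Ω (z j)) atTop (𝓝 b) := hb
  have hdistb : ε ≤ dist b (Ω ξ) := by
    have hdd : Tendsto (fun j => dist (Ω (y (φ (ψ j)))) (Ω ξ)) atTop (𝓝 (dist b (Ω ξ))) :=
      hb.dist tendsto_const_nhds
    exact ge_of_tendsto' hdd (fun j => hdist (ψ j))
  have hbne : b ≠ Ω ξ := by
    intro h
    rw [h] at hdistb
    simp at hdistb
    exact absurd hdistb (not_le.2 hε)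
  -- unit vectors
  set uj : ℕ → EuclideanSpace ℝ (Fin d) := fun j => ‖z j‖⁻¹ • z j with hujdef
  set u : EuclideanSpace ℝ (Fin d) := ‖ξ‖⁻¹ • ξ with hudef
  have huj1 : ∀ j, ‖uj j‖ = 1 := fun j => norm_smul_inv_norm (hzne j)
  have hu1 : ‖u‖ = 1 := norm_smul_inv_norm hξ
  have hujne : ∀ j, uj j ≠ 0 := fun j h => by
    have h1 := huj1 j; rw [h] at h1; simp at h1
  have hune : u ≠ 0 := fun h => by
    have h1 := hu1; rw [h] at h1; simp at h1
  have hujlim : Tendsto uj atTop (𝓝 u) :=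
    (hzlim.norm.inv₀ (norm_ne_zero_iff.2 hξ)).smul hzlim
  -- homogeneity identities
  have hΩuj : ∀ j, Ω (z j) = Ω (uj j) := by
    intro j
    have := hhom ‖z j‖ (norm_pos_iff.2 (hzne j)) (uj j) (hujne j)
    rwa [hujdef, smul_inv_smul₀ (norm_ne_zero_iff.2 (hzne j))] at this
  have hΩu : Ω ξ = Ω u := by
    have := hhom ‖ξ‖ (norm_pos_iff.2 hξ) u hune
    rwa [hudef, smul_inv_smul₀ (norm_ne_zero_iff.2 hξ)] at this
  -- choose t_j
  have hchoose : ∀ j : ℕ, ∃ r : ℝ, (r ∈ Set.Ioo (0:ℝ) (1 / ((j:ℝ) + 1))) ∧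
      dist (m (r • uj j)) (Ω (uj j)) < 1 / ((j:ℝ) + 1) := by
    intro j
    have h1 : ∀ᶠ r in 𝓝[>] (0:ℝ), dist (m (r • uj j)) (Ω (uj j)) < 1 / ((j:ℝ) + 1) :=
      (Metric.tendsto_nhds.1 (hrad (uj j) (hujne j))) _ (by positivity)
    have h2 : ∀ᶠ r in 𝓝[>] (0:ℝ), r ∈ Set.Ioo (0:ℝ) (1 / ((j:ℝ) + 1)) :=
      Ioo_mem_nhdsGT (by positivity)
    exact (h2.and h1).exists
  choose t htIoo htd using hchoose
  have ht0 : ∀ j, 0 < t j := fun j => (htIoo j).1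
  have htlim : Tendsto t atTop (𝓝 0) :=
    squeeze_zero (fun j => (ht0 j).le) (fun j => (htIoo j).2.le)
      tendsto_one_div_add_atTop_nhds_zero_nat
  have hchoose' : ∀ j : ℕ, ∃ r : ℝ, (r ∈ Set.Ioo (0:ℝ) (1 / ((j:ℝ) + 1))) ∧
      dist (m (r • u)) (Ω u) < 1 / ((j:ℝ) + 1) := by
    intro j
    have h1 : ∀ᶠ r in 𝓝[>] (0:ℝ), dist (m (r • u)) (Ω u) < 1 / ((j:ℝ) + 1) :=
      (Metric.tendsto_nhds.1 (hrad u hune)) _ (by positivity)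
    have h2 : ∀ᶠ r in 𝓝[>] (0:ℝ), r ∈ Set.Ioo (0:ℝ) (1 / ((j:ℝ) + 1)) :=
      Ioo_mem_nhdsGT (by positivity)
    exact (h2.and h1).exists
  choose s hsIoo hsd using hchoose'
  have hs0 : ∀ j, 0 < s j := fun j => (hsIoo j).1
  have hslim : Tendsto s atTop (𝓝 0) :=
    squeeze_zero (fun j => (hs0 j).le) (fun j => (hsIoo j).2.le)
      tendsto_one_div_add_atTop_nhds_zero_nat
  -- limits of m along the chosen sequences
  have hΩujb : Tendsto (fun j => Ω (uj j)) atTop (𝓝 b) := by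
    rw [← tendsto_congr hΩuj]
    exact hΩz
  have hmt : Tendsto (fun j => m (t j • uj j)) atTop (𝓝 b) := by
    have h2 : Tendsto (fun j => m (t j • uj j) - Ω (uj j)) atTop (𝓝 0) :=
      squeeze_zero_norm (fun j => by rw [← dist_eq_norm]; exact (htd j).le)
        tendsto_one_div_add_atTop_nhds_zero_nat
    have := h2.add hΩujb
    simpa using this
  have hms : Tendsto (fun j => m (s j • u)) atTop (𝓝 (Ω u)) := by
    have h2 : Tendsto (fun j => m (s j • u) - Ω u) atTop (𝓝 0) :=
      squeeze_zero_norm (fun j => by rw [← dist_eq_norm]; exact (hsd j).le)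
        tendsto_one_div_add_atTop_nhds_zero_nat
    have := h2.add (tendsto_const_nhds (x := Ω u))
    simpa using this
  have := arl_key hstar ht0 hs0 htlim hslim huj1 hu1 hujlim hmt hms
  exact hbne (this.trans hΩu.symm)
end
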